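/- Let q be a prime power and t ≥ 2 an integer with rad(t) dividing q−1 and such that 4 ∣ t implies q ≡ 1 (mod 4). Writing q−1 = R·S where R is the largest divisor of q−1 coprime to rad(t), the number of elements a of F_q* whose multiplicative order e satisfies rad(t) ∣ e and gcd(t, (q−1)/e) = 1 equals φ(S)·R = (φ(t)/t)·(q−1). -/

import Mathlib

open Polynomial

/-- The radical of `n`: the largest squarefree divisor of `n`. -/
def rad (n : ℕ) : ℕ := ∏ p ∈ n.primeFactors, p

/-!
Write `n = q - 1 = R * S`. Maximality of `R` forces `S` to have exactly the prime factors of `t`,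
and then `R` and `S` are coprime. For a divisor `e` of `n`, the condition
`rad t ∣ e ∧ gcd (t, n / e) = 1` says that no prime of `t` (equivalently, of `S`) divides the
cofactor `n / e`, i.e. that `S ∣ e`. In the cyclic group `𝔽_q^×` the elements whose order is a
multiple of `S` number `∑_{d ∣ R} φ(S d) = φ(S) ∑_{d ∣ R} φ(d) = φ(S) R`.
Finally `φ(m) / m` depends only on the prime factors of `m`, so
`φ(S) R = φ(S) / S · n = φ(t) / t · n`.
-/

open Finset
open scoped Nat

lemma primeFactors_rad (n : ℕ) : (rad n).primeFactors = n.primeFactors :=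
  Nat.primeFactors_prod_primeFactors n

lemma Nat.Prime.dvd_rad_iff {p n : ℕ} (hp : p.Prime) (hn : n ≠ 0) : p ∣ rad n ↔ p ∣ n :=
  ⟨fun h => h.trans (Nat.prod_primeFactors_dvd n),
    fun h => dvd_prod_of_mem _ (Nat.mem_primeFactors.mpr ⟨hp, h, hn⟩)⟩

lemma Nat.Coprime.of_primeFactors_subset {a b m : ℕ} (hb : b ≠ 0)
    (h : b.primeFactors ⊆ a.primeFactors) (hcop : Nat.Coprime a m) : Nat.Coprime b m := by
  refine Nat.coprime_of_dvd fun p hp hpb => ?_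
  have hpa : p ∣ a :=
    Nat.dvd_of_mem_primeFactors (h (Nat.mem_primeFactors_of_ne_zero hb |>.mpr ⟨hp, hpb⟩))
  exact (Nat.Prime.coprime_iff_not_dvd hp).mp (hcop.coprime_dvd_left hpa)

lemma Nat.coprime_iff_of_primeFactors_eq {a b : ℕ} (ha : a ≠ 0) (hb : b ≠ 0)
    (h : a.primeFactors = b.primeFactors) (m : ℕ) : Nat.Coprime a m ↔ Nat.Coprime b m :=
  ⟨.of_primeFactors_subset hb h.ge, .of_primeFactors_subset ha h.le⟩

lemma Nat.totient_div_self_eq_of_primeFactors_eq {a b : ℕ} (ha : a ≠ 0) (hb : b ≠ 0)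
    (h : a.primeFactors = b.primeFactors) : (φ a : ℚ) / a = φ b / b := by
  rw [Nat.totient_eq_mul_prod_factors, Nat.totient_eq_mul_prod_factors, h,
    mul_div_cancel_left₀ _ (Nat.cast_ne_zero.mpr ha),
    mul_div_cancel_left₀ _ (Nat.cast_ne_zero.mpr hb)]

lemma Nat.dvd_iff_coprime_of_mul_eq {e m R S : ℕ} (h : e * m = R * S) (hRS : Nat.Coprime R S)
    (hS : S ≠ 0) : S ∣ e ↔ Nat.Coprime S m := by
  constructor
  · rintro ⟨k, rfl⟩
    have hkm : k * m = R := by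
      apply Nat.eq_of_mul_eq_mul_left (Nat.pos_of_ne_zero hS)
      rw [← mul_assoc, h, mul_comm]
    exact hRS.symm.coprime_dvd_right (hkm ▸ dvd_mul_left m k)
  · intro hcop
    exact hcop.dvd_of_dvd_mul_right (h ▸ dvd_mul_left S R)

theorem IsCyclic.card_filter_dvd_orderOf {G : Type*} [Group G] [Fintype G] [IsCyclic G]
    {S R : ℕ} (hcard : Fintype.card G = S * R) (hSR : Nat.Coprime S R) :
    #{a : G | S ∣ orderOf a} = φ S * R := by
  have hSR0 : S * R ≠ 0 := hcard ▸ Fintype.card_ne_zero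
  have hS : 0 < S := Nat.pos_of_ne_zero (left_ne_zero_of_mul hSR0)
  have hmaps : Set.MapsTo (fun a : G => orderOf a / S) ↑({a : G | S ∣ orderOf a} : Finset G)
      R.divisors := fun a ha =>
    Nat.mem_divisors.mpr ⟨(Nat.div_dvd_iff_dvd_mul (mem_filter.mp (mem_coe.mp ha)).2 hS).mpr
      (hcard ▸ orderOf_dvd_card), right_ne_zero_of_mul hSR0⟩
  have hfiber : ∀ d x : ℕ, S ∣ x ∧ x / S = d ↔ x = S * d := fun d x =>
    ⟨fun ⟨hdvd, hd⟩ => hd ▸ (Nat.mul_div_cancel' hdvd).symm,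
      fun hx => ⟨hx ▸ dvd_mul_right S d, hx ▸ Nat.mul_div_cancel_left d hS⟩⟩
  calc #{a : G | S ∣ orderOf a}
      = ∑ d ∈ R.divisors, #{a : G | orderOf a = S * d} := by
        rw [card_eq_sum_card_fiberwise hmaps]
        simp only [filter_filter, hfiber]
    _ = ∑ d ∈ R.divisors, φ S * φ d := by
        refine sum_congr rfl fun d hd => ?_
        have hdR : d ∣ R := Nat.dvd_of_mem_divisors hd
        rw [IsCyclic.card_orderOf_eq_totient (hcard ▸ mul_dvd_mul_left S hdR),
          Nat.totient_mul (hSR.coprime_dvd_right hdR)]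
    _ = φ S * R := by rw [← mul_sum, Nat.sum_totient]

section MaximalCoprimeDivisor

variable {n t R S : ℕ}

lemma primeFactors_eq_of_maximal_coprime_divisor (hn : n ≠ 0) (ht : t ≠ 0) (hRS : R * S = n)
    (hrad : rad t ∣ n) (hRcop : Nat.Coprime R (rad t))
    (hRmax : ∀ d : ℕ, d ∣ n → Nat.Coprime d (rad t) → d ≤ R) :
    S.primeFactors = t.primeFactors := by
  have hR : R ≠ 0 := by rintro rfl; simp [← hRS] at hn
  have hS : S ≠ 0 := by rintro rfl; simp [← hRS] at hn
  ext p
  simp only [Nat.mem_primeFactors, hS, ht, ne_eq, not_false_eq_true, and_true,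
    and_congr_right_iff]
  intro hp
  rw [← hp.dvd_rad_iff ht]
  constructor
  · intro hpS
    by_contra hprad
    -- otherwise `R * p` would be a larger divisor of `n` coprime to `rad t`
    have := hRmax (R * p) (hRS ▸ mul_dvd_mul_left R hpS)
      (hRcop.mul_left ((Nat.Prime.coprime_iff_not_dvd hp).mpr hprad))
    nlinarith [hp.two_le, Nat.pos_of_ne_zero hR]
  · intro hprad
    refine (hp.dvd_mul.mp (hRS ▸ hprad.trans hrad)).resolve_left fun hpR => ?_
    exact (Nat.Prime.coprime_iff_not_dvd hp).mp (hRcop.coprime_dvd_left hpR) hprad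

lemma rad_dvd_and_coprime_div_iff_dvd (ht : t ≠ 0) (hS : S ≠ 0) (hRS : R * S = n)
    (hcop : Nat.Coprime R S) (hpf : S.primeFactors = t.primeFactors) {e : ℕ} (he : e ∣ n) :
    rad t ∣ e ∧ Nat.Coprime t (n / e) ↔ S ∣ e := by
  have hradS : rad t ∣ S := (Nat.prod_primeFactors_dvd_iff hS).mpr hpf.ge
  rw [Nat.coprime_iff_of_primeFactors_eq ht hS hpf.symm,
    ← Nat.dvd_iff_coprime_of_mul_eq ((Nat.mul_div_cancel' he).trans hRS.symm) hcop hS]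
  exact and_iff_right_of_imp hradS.trans

end MaximalCoprimeDivisor

theorem count_orders_eq_general (F : Type*) [Field F] [Fintype F] (t R S : ℕ) (ht : 2 ≤ t)
    (hrad : rad t ∣ Fintype.card F - 1)
    (hRS : R * S = Fintype.card F - 1)
    (hRcop : Nat.Coprime R (rad t))
    (hRmax : ∀ d : ℕ, d ∣ Fintype.card F - 1 → Nat.Coprime d (rad t) → d ≤ R) :
    Nat.card {a : Fˣ // rad t ∣ orderOf a ∧
        Nat.gcd t ((Fintype.card F - 1) / orderOf a) = 1} = Nat.totient S * R ∧
      ((Nat.totient S * R : ℕ) : ℚ) =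
        (Nat.totient t : ℚ) / t * ((Fintype.card F : ℚ) - 1) := by
  classical
  set n := Fintype.card F - 1
  have hn : n ≠ 0 := by have := Fintype.one_lt_card (α := F); omega
  have ht0 : t ≠ 0 := by omega
  have hS : S ≠ 0 := by rintro rfl; simp [← hRS] at hn
  have hunits : Fintype.card Fˣ = n := Fintype.card_units F
  have hpf : S.primeFactors = t.primeFactors :=
    primeFactors_eq_of_maximal_coprime_divisor hn ht0 hRS hrad hRcop hRmax
  have hcop : Nat.Coprime S R :=
    hRcop.symm.of_primeFactors_subset hS (hpf.trans (primeFactors_rad t).symm).le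
  refine ⟨?_, ?_⟩
  · rw [Nat.card_eq_fintype_card, Fintype.card_subtype, filter_congr fun a _ =>
      rad_dvd_and_coprime_div_iff_dvd ht0 hS hRS hcop.symm hpf (hunits ▸ orderOf_dvd_card)]
    exact IsCyclic.card_filter_dvd_orderOf (by rw [hunits, ← hRS, mul_comm]) hcop
  · have hq : (Fintype.card F : ℚ) - 1 = R * S := by
      rw [← Nat.cast_pred Fintype.card_pos, ← Nat.cast_mul, hRS]
    rw [← Nat.totient_div_self_eq_of_primeFactors_eq hS ht0 hpf, hq]
    field_simp
    push_cast
    ring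

theorem count_orders_eq (F : Type*) [Field F] [Fintype F] (t R S : ℕ) (ht : 2 ≤ t)
    (hrad : rad t ∣ Fintype.card F - 1)
    (h4 : 4 ∣ t → Fintype.card F ≡ 1 [MOD 4])
    (hRS : R * S = Fintype.card F - 1)
    (hRdvd : R ∣ Fintype.card F - 1)
    (hRcop : Nat.Coprime R (rad t))
    (hRmax : ∀ d : ℕ, d ∣ Fintype.card F - 1 → Nat.Coprime d (rad t) → d ≤ R) :
    Nat.card {a : Fˣ // rad t ∣ orderOf a ∧
        Nat.gcd t ((Fintype.card F - 1) / orderOf a) = 1} = Nat.totient S * R ∧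
      ((Nat.totient S * R : ℕ) : ℚ) =
        (Nat.totient t : ℚ) / t * ((Fintype.card F : ℚ) - 1) :=
  count_orders_eq_general F t R S ht hrad hRS hRcop hRmax
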